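/- arXiv:0710.1131 — 8 statements merged into one kernel-verified Lean document; each statement's English description precedes it below -/
import Mathlib

section
/- Let a ≥ 0 and b > 0 be real numbers and let n ≥ 1 be an integer. Then the series S(a,b) = ∑_{k=1}^∞ 1/([a+kb][a+(k+1)b]⋯[a+(k+n)b]) converges and S(a,b) = (1/(n b)) ∏_{i=1}^{n} 1/(a+ib). -/
open Filter Finset
set_option maxHeartbeats 1000000

theorem stmt_4 (a b : ℝ) (ha : 0 ≤ a) (hb : 0 < b) (n : ℕ) (hn : 1 ≤ n) :
    HasSum (fun k : ℕ => 1 / ∏ i ∈ Finset.range (n + 1), (a + ((k : ℝ) + 1 + i) * b))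
      (1 / (n * b) * ∏ i ∈ Finset.range n, 1 / (a + ((i : ℝ) + 1) * b)) := by
  set P : ℕ → ℝ := fun k => ∏ i ∈ Finset.range n, (a + ((k : ℝ) + 1 + i) * b) with hP
  have hfac : ∀ (k i : ℕ), 0 < a + ((k : ℝ) + 1 + i) * b := by
    intro k i
    have h1 : (0:ℝ) < ((k:ℝ) + 1 + i) := by positivity
    nlinarith [mul_pos h1 hb]
  have hPpos : ∀ k, 0 < P k := fun k => Finset.prod_pos (fun i _ => hfac k i)
  have hnpos : (0:ℝ) < n := by exact_mod_cast hn
  have hnb : (0:ℝ) < (n:ℝ) * b := mul_pos hnpos hb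
  set g : ℕ → ℝ := fun k => 1 / ((n:ℝ) * b) * (1 / P k) with hg
  have hD : ∀ k : ℕ, ∏ i ∈ Finset.range (n+1), (a + ((k : ℝ) + 1 + i) * b)
      = P k * (a + ((k:ℝ) + 1 + n) * b) := fun k => Finset.prod_range_succ _ n
  have hD' : ∀ k : ℕ, ∏ i ∈ Finset.range (n+1), (a + ((k : ℝ) + 1 + i) * b)
      = (a + ((k:ℝ) + 1) * b) * P (k+1) := by
    intro k
    rw [Finset.prod_range_succ']
    rw [mul_comm]
    congr 1
    · push_cast; ring_nf
    · apply Finset.prod_congr rfl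
      intro i _
      push_cast; ring_nf
  have hterm : ∀ k : ℕ, 1 / ∏ i ∈ Finset.range (n+1), (a + ((k : ℝ) + 1 + i) * b)
      = g k - g (k+1) := by
    intro k
    have h1 := hD k
    have h2 := hD' k
    have hP1 := hPpos k
    have hP2 := hPpos (k+1)
    have hx : 0 < a + ((k:ℝ)+1+n)*b := hfac k n
    have hy : 0 < a + ((k:ℝ)+1)*b := by simpa using hfac k 0
    have h12 : P k * (a + ((k:ℝ)+1+n)*b) = (a + ((k:ℝ)+1)*b) * P (k+1) := by
      rw [← h1, ← h2]
    rw [h1, hg]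
    simp only
    field_simp
    linear_combination h12
  have htendP : Tendsto P atTop atTop := by
    have hlin : Tendsto (fun k : ℕ => ((k:ℝ)+1)*b) atTop atTop := by
      exact (tendsto_atTop_add_const_right atTop 1 tendsto_natCast_atTop_atTop).atTop_mul_const hb
    apply tendsto_atTop_mono' atTop _ hlin
    filter_upwards [hlin.eventually_ge_atTop 1] with k hk
    have hbase : (((k:ℝ)+1)*b)^n ≤ P k := by
      rw [hP]
      simp only
      calc (((k:ℝ)+1)*b)^n = ∏ _i ∈ Finset.range n, ((k:ℝ)+1)*b := by
            rw [Finset.prod_const, Finset.card_range]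
        _ ≤ _ := Finset.prod_le_prod (fun i _ => by positivity)
            (fun i _ => by nlinarith [mul_nonneg (Nat.cast_nonneg i : (0:ℝ) ≤ i) hb.le])
    calc ((k:ℝ)+1)*b ≤ (((k:ℝ)+1)*b)^n := le_self_pow₀ hk (by omega)
      _ ≤ P k := hbase
  have htendg : Tendsto g atTop (nhds 0) := by
    have : Tendsto (fun k => (P k)⁻¹) atTop (nhds 0) := htendP.inv_tendsto_atTop
    have h2 : Tendsto (fun k => 1/((n:ℝ)*b) * (P k)⁻¹) atTop (nhds (1/((n:ℝ)*b) * 0)) :=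
      this.const_mul _
    simpa [hg, one_div] using h2
  have hg0 : g 0 = 1 / (n * b) * ∏ i ∈ Finset.range n, 1 / (a + ((i : ℝ) + 1) * b) := by
    rw [hg, hP]
    simp only
    simp only [one_div]
    rw [← Finset.prod_inv_distrib]
    congr 1
    apply Finset.prod_congr rfl
    intro i _
    have h : ((0:ℕ):ℝ) + 1 + (i:ℝ) = (i:ℝ) + 1 := by push_cast; ring
    rw [h]
  rw [← hg0]
  rw [hasSum_iff_tendsto_nat_of_nonneg]
  · have : ∀ N : ℕ, ∑ k ∈ Finset.range N, 1 / ∏ i ∈ Finset.range (n+1), (a + ((k : ℝ) + 1 + i) * b) = g 0 - g N := by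
      intro N
      rw [show (fun k : ℕ => 1 / ∏ i ∈ Finset.range (n+1), (a + ((k : ℝ) + 1 + i) * b)) = fun k => g k - g (k+1) from funext hterm] 
      exact Finset.sum_range_sub' g N
    simp only [this]
    simpa using (tendsto_const_nhds (x := g 0)).sub htendg
  · intro k
    positivity
end

section
/- Let a ≥ 0 and b > 0 be real numbers and let n ≥ 1 be an integer. Then ∑_{k=1}^∞ 1/([a+kb][a+(k+1)b]⋯[a+(k+n)b]) = (1/(b^n n!)) ∫_0^1 u^{a+b-1} (1-u^b)^{n-1} du. -/
open Finset Filter Topology MeasureTheory intervalIntegral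


lemma partial_frac (b : ℝ) (hb : 0 < b) :
    ∀ m : ℕ, ∀ x : ℝ, 0 < x →
    ∑ j ∈ range (m + 1), (-1 : ℝ) ^ j * (m.choose j) / (x + j * b)
      = b ^ m * m.factorial / ∏ j ∈ range (m + 1), (x + j * b) := by
  intro m
  induction m with
  | zero => intro x hx; simp
  | succ m ih =>
    intro x hx
    have hxb : 0 < x + b := by linarith
    have hpos : ∀ (y : ℝ), 0 < y → ∀ j : ℕ, 0 < y + j * b := by
      intro y hy j
      have : (0:ℝ) ≤ j * b := by positivity
      linarith
    have hP : 0 < ∏ j ∈ range (m + 1), (x + j * b) :=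
      prod_pos fun j _ => hpos x hx j
    have hQ : 0 < ∏ j ∈ range (m + 1), (x + b + j * b) :=
      prod_pos fun j _ => hpos (x + b) hxb j
    have hR : 0 < ∏ j ∈ range (m + 2), (x + j * b) :=
      prod_pos fun j _ => hpos x hx j
    -- key sum identity
    have key : ∑ j ∈ range (m + 2), (-1 : ℝ) ^ j * ((m+1).choose j) / (x + j * b)
        = (∑ j ∈ range (m + 1), (-1 : ℝ) ^ j * (m.choose j) / (x + j * b))
          - ∑ j ∈ range (m + 1), (-1 : ℝ) ^ j * (m.choose j) / (x + b + j * b) := by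
      rw [Finset.sum_range_succ' (fun j => (-1 : ℝ) ^ j * ((m+1).choose j) / (x + j * b)) (m+1)]
      push_cast
      have step : ∀ i ∈ range (m+1),
          (-1 : ℝ) ^ (i+1) * ((m+1).choose (i+1)) / (x + (i+1) * b)
          = (-1 : ℝ) ^ (i+1) * (m.choose (i+1)) / (x + (i+1) * b)
            - (-1 : ℝ) ^ i * (m.choose i) / (x + b + i * b) := by
        intro i _
        rw [Nat.choose_succ_succ']
        push_cast
        have : x + (↑i + 1) * b = x + b + i * b := by ring
        rw [this]
        ring
      rw [Finset.sum_congr rfl step, Finset.sum_sub_distrib]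
      have fold : (∑ i ∈ range (m+1), (-1 : ℝ) ^ (i+1) * (m.choose (i+1)) / (x + (i+1) * b))
          + (-1 : ℝ) ^ 0 * ((m+1).choose 0) / (x + 0 * b)
          = ∑ j ∈ range (m + 2), (-1 : ℝ) ^ j * (m.choose j) / (x + j * b) := by
        rw [Finset.sum_range_succ' (fun j => (-1 : ℝ) ^ j * (m.choose j) / (x + j * b)) (m+1)]
        push_cast
        simp
      have last : ∑ j ∈ range (m + 2), (-1 : ℝ) ^ j * (m.choose j) / (x + j * b)
          = ∑ j ∈ range (m + 1), (-1 : ℝ) ^ j * (m.choose j) / (x + j * b) := by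
        rw [Finset.sum_range_succ]
        simp [Nat.choose_succ_self]
      rw [sub_add_eq_add_sub, fold, last]
    rw [key, ih x hx, ih (x + b) hxb]
    -- product relations
    have hR1 : ∏ j ∈ range (m + 2), (x + j * b)
        = (∏ j ∈ range (m + 1), (x + j * b)) * (x + (m+1) * b) := by
      rw [Finset.prod_range_succ]; push_cast; ring
    have hR2 : ∏ j ∈ range (m + 2), (x + j * b)
        = (∏ j ∈ range (m + 1), (x + b + j * b)) * x := by
      rw [Finset.prod_range_succ' (fun j => x + j * b) (m+1)]
      simp only [Nat.cast_zero, zero_mul, add_zero]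
      congr 1
      refine Finset.prod_congr rfl fun j _ => ?_
      push_cast; ring
    have hm1 : (0:ℝ) < x + ((m:ℝ)+1) * b := by
      have := hpos x hx (m+1); push_cast at this; exact this
    rw [hR1]
    have hfac : ((m+1).factorial : ℝ) = (m+1) * m.factorial := by
      rw [Nat.factorial_succ]; push_cast; ring
    have hQeq : ∏ j ∈ range (m + 1), (x + b + j * b)
        = (∏ j ∈ range (m + 1), (x + j * b)) * (x + (m+1) * b) / x := by
      rw [eq_div_iff hx.ne', ← hR1, hR2]
    rw [hQeq, hfac]
    field_simp
    ring


lemma tele (a b : ℝ) (ha : 0 ≤ a) (hb : 0 < b) (m : ℕ) :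
    ∑' k : ℕ, 1 / ∏ i ∈ Finset.range (m + 2), (a + ((k : ℝ) + 1 + i) * b)
      = 1 / (((m : ℝ) + 1) * b * ∏ i ∈ Finset.range (m + 1), (a + ((0 : ℝ) + 1 + i) * b)) := by
  set c : ℝ := (m : ℝ) + 1 with hc
  have hcpos : 0 < c := by positivity
  have hfac : ∀ (x : ℝ), 0 ≤ x → 0 < a + (x + 1) * b := by
    intro x hx; nlinarith
  set f : ℕ → ℝ := fun k => 1 / ∏ i ∈ Finset.range (m + 2), (a + ((k : ℝ) + 1 + i) * b)
    with hf
  set g : ℕ → ℝ :=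
    fun k => 1 / (c * b * ∏ i ∈ Finset.range (m + 1), (a + ((k : ℝ) + 1 + i) * b)) with hg
  have hPpos : ∀ (k : ℕ) (M : ℕ), 0 < ∏ i ∈ Finset.range M, (a + ((k : ℝ) + 1 + i) * b) := by
    intro k M
    refine Finset.prod_pos fun i _ => ?_
    have h : a + ((k : ℝ) + 1 + i) * b = a + (((k : ℝ) + i) + 1) * b := by ring
    rw [h]
    exact hfac _ (by positivity)
  have hfpos : ∀ k, 0 < f k := fun k => by
    simp only [hf]; exact one_div_pos.mpr (hPpos k (m + 2))
  have hgpos : ∀ k, 0 < g k := fun k => by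
    have := hPpos k (m + 1)
    simp only [hg]
    positivity
  -- telescoping identity
  have hdiff : ∀ k : ℕ, f k = g k - g (k + 1) := by
    intro k
    have hPk := hPpos k (m + 1)
    have hPk1 := hPpos (k + 1) (m + 1)
    have hR := hPpos k (m + 2)
    have hA : (0:ℝ) < a + ((k : ℝ) + 1 + ((m : ℝ) + 1)) * b := by
      have h : a + ((k : ℝ) + 1 + ((m : ℝ) + 1)) * b
          = a + (((k : ℝ) + (m : ℝ) + 1) + 1) * b := by ring
      rw [h]; exact hfac _ (by positivity)
    have hB : (0:ℝ) < a + ((k : ℝ) + 1) * b := by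
      have h : a + ((k : ℝ) + 1) * b = a + ((k : ℝ) + 1) * b := rfl
      exact hfac _ (by positivity)
    have e1 : ∏ i ∈ Finset.range (m + 2), (a + ((k : ℝ) + 1 + i) * b)
        = (∏ i ∈ Finset.range (m + 1), (a + ((k : ℝ) + 1 + i) * b))
          * (a + ((k : ℝ) + 1 + ((m : ℝ) + 1)) * b) := by
      rw [Finset.prod_range_succ]; push_cast; ring
    have e2 : ∏ i ∈ Finset.range (m + 2), (a + ((k : ℝ) + 1 + i) * b)
        = (∏ i ∈ Finset.range (m + 1), (a + (((k + 1 : ℕ) : ℝ) + 1 + i) * b))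
          * (a + ((k : ℝ) + 1) * b) := by
      rw [Finset.prod_range_succ' (fun i => a + ((k : ℝ) + 1 + i) * b) (m + 1)]
      congr 1
      · refine Finset.prod_congr rfl fun i _ => ?_
        push_cast; ring
      · norm_num
    have gk : g k = (a + ((k : ℝ) + 1 + ((m : ℝ) + 1)) * b)
        / (c * b * ∏ i ∈ Finset.range (m + 2), (a + ((k : ℝ) + 1 + i) * b)) := by
      simp only [hg]
      rw [e1]
      rw [div_eq_div_iff (by positivity) (by positivity)]
      ring
    have gk1 : g (k + 1) = (a + ((k : ℝ) + 1) * b)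
        / (c * b * ∏ i ∈ Finset.range (m + 2), (a + ((k : ℝ) + 1 + i) * b)) := by
      simp only [hg]
      rw [e2]
      rw [div_eq_div_iff (by positivity) (by positivity)]
      ring
    simp only [hf]
    rw [gk, gk1, div_sub_div_same]
    have h3 : a + ((k : ℝ) + 1 + ((m : ℝ) + 1)) * b - (a + ((k : ℝ) + 1) * b) = c * b := by
      rw [hc]; ring
    rw [h3]
    rw [div_eq_div_iff (hPpos k (m+2)).ne' (by positivity)]
    ring
  -- partial sums
  have hsum : ∀ N : ℕ, ∑ k ∈ Finset.range N, f k = g 0 - g N := by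
    intro N
    rw [Finset.sum_congr rfl fun k _ => hdiff k]
    exact Finset.sum_range_sub' g N
  -- g tends to zero
  have hgle : ∀ N : ℕ, g N ≤ 1 / (c * b ^ (m + 2)) * (1 / ((N : ℝ) + 1)) := by
    intro N
    have hPN : ((N : ℝ) + 1) * b ^ (m + 1)
        ≤ ∏ i ∈ Finset.range (m + 1), (a + ((N : ℝ) + 1 + i) * b) := by
      have h1 : (((N : ℝ) + 1) * b) ^ (m + 1)
          ≤ ∏ i ∈ Finset.range (m + 1), (a + ((N : ℝ) + 1 + i) * b) := by
        calc (((N : ℝ) + 1) * b) ^ (m + 1)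
            = ∏ _i ∈ Finset.range (m + 1), (((N : ℝ) + 1) * b) := by
              rw [Finset.prod_const, Finset.card_range]
          _ ≤ _ := ?_
        refine Finset.prod_le_prod (fun i _ => by positivity) (fun i _ => ?_)
        have : (0:ℝ) ≤ (i : ℝ) * b := by positivity
        nlinarith [Nat.cast_nonneg (α := ℝ) i]
      calc ((N : ℝ) + 1) * b ^ (m + 1)
          ≤ ((N : ℝ) + 1) ^ (m + 1) * b ^ (m + 1) := by
            have h2 : ((N : ℝ) + 1) ≤ ((N : ℝ) + 1) ^ (m + 1) := by
              nth_rewrite 1 [← pow_one ((N : ℝ) + 1)]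
              exact pow_le_pow_right₀ (by linarith [Nat.cast_nonneg (α := ℝ) N])
                (by omega)
            nlinarith [pow_pos hb (m + 1)]
        _ = (((N : ℝ) + 1) * b) ^ (m + 1) := by rw [mul_pow]
        _ ≤ _ := h1
    have heq : 1 / (c * b ^ (m + 2)) * (1 / ((N : ℝ) + 1))
        = 1 / (c * b * (((N : ℝ) + 1) * b ^ (m + 1))) := by
      rw [one_div_mul_one_div]
      congr 1
      ring
    rw [heq]
    simp only [hg]
    apply one_div_le_one_div_of_le (by positivity)
    exact mul_le_mul_of_nonneg_left hPN (by positivity)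
  have hlim : Tendsto g atTop (𝓝 0) := by
    refine squeeze_zero (fun N => (hgpos N).le) hgle ?_
    have := tendsto_one_div_add_atTop_nhds_zero_nat.const_mul (1 / (c * b ^ (m + 2)))
    simpa using this
  have htend : Tendsto (fun N => ∑ k ∈ Finset.range N, f k) atTop (𝓝 (g 0)) := by
    simp only [hsum]
    have := tendsto_const_nhds (x := g 0) (f := atTop (α := ℕ)) |>.sub hlim
    simpa using this
  have hhs : HasSum f (g 0) :=
    (hasSum_iff_tendsto_nat_of_nonneg (fun k => (hfpos k).le) (g 0)).mpr htend
  rw [hhs.tsum_eq]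
  simp only [hg, Nat.cast_zero]


lemma int_eval (a b : ℝ) (ha : 0 ≤ a) (hb : 0 < b) (m : ℕ) :
    ∫ u in (0:ℝ)..1, u ^ (a + b - 1) * (1 - u ^ b) ^ m
      = ∑ j ∈ Finset.range (m + 1), (-1 : ℝ) ^ j * (m.choose j) / (a + b + j * b) := by
  have hp : ∀ j : ℕ, (-1 : ℝ) < a + b - 1 + j * b := by
    intro j
    have : (0:ℝ) ≤ (j : ℝ) * b := by positivity
    linarith
  have step1 : ∫ u in (0:ℝ)..1, u ^ (a + b - 1) * (1 - u ^ b) ^ m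
      = ∫ u in (0:ℝ)..1,
          ∑ j ∈ Finset.range (m + 1), (-1 : ℝ) ^ j * (m.choose j) * u ^ (a + b - 1 + j * b) := by
    apply intervalIntegral.integral_congr_ae
    filter_upwards with u hu
    rw [Set.uIoc_of_le (by norm_num : (0:ℝ) ≤ 1)] at hu
    have hu0 : 0 < u := hu.1
    have hbin : (1 - u ^ b) ^ m
        = ∑ j ∈ Finset.range (m + 1), (-1 : ℝ) ^ j * (m.choose j) * (u ^ b) ^ j := by
      have := add_pow (-(u ^ b)) 1 m
      simp only [one_pow, mul_one] at this
      rw [show (1 : ℝ) - u ^ b = -(u ^ b) + 1 by ring, this]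
      refine Finset.sum_congr rfl fun j _ => ?_
      rw [neg_pow]
      ring
    rw [hbin, Finset.mul_sum]
    refine Finset.sum_congr rfl fun j _ => ?_
    rw [← Real.rpow_natCast (u ^ b) j, ← Real.rpow_mul hu0.le,
      show a + b - 1 + (j : ℝ) * b = a + b - 1 + b * (j : ℝ) by ring,
      Real.rpow_add hu0]
    ring
  rw [step1]
  rw [intervalIntegral.integral_finset_sum (fun j _ =>
    ((intervalIntegral.intervalIntegrable_rpow' (hp j)).const_mul _))]
  refine Finset.sum_congr rfl fun j _ => ?_
  rw [intervalIntegral.integral_const_mul, integral_rpow (Or.inl (hp j))]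
  have hne : a + b - 1 + (j : ℝ) * b + 1 ≠ 0 := by
    have : (0:ℝ) ≤ (j : ℝ) * b := by positivity
    intro h; nlinarith
  rw [Real.one_rpow, Real.zero_rpow hne]
  rw [show a + b - 1 + (j : ℝ) * b + 1 = a + b + j * b by ring]
  ring


theorem stmt_5 (a b : ℝ) (ha : 0 ≤ a) (hb : 0 < b) (n : ℕ) (hn : 1 ≤ n) :
    ∑' k : ℕ, 1 / ∏ i ∈ Finset.range (n + 1), (a + ((k : ℝ) + 1 + i) * b) =
      (1 / (b ^ n * n.factorial)) *
        ∫ u in (0 : ℝ)..1, u ^ (a + b - 1) * (1 - u ^ b) ^ (n - 1) := by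
  obtain ⟨m, rfl⟩ : ∃ m, n = m + 1 := ⟨n - 1, (Nat.succ_pred_eq_of_pos hn).symm⟩
  have hab : 0 < a + b := by linarith
  simp only [show m + 1 + 1 = m + 2 from rfl, Nat.add_sub_cancel]
  rw [tele a b ha hb m, int_eval a b ha hb m, partial_frac b hb m (a + b) hab]
  have hprod : ∏ i ∈ Finset.range (m + 1), (a + ((0 : ℝ) + 1 + i) * b)
      = ∏ j ∈ Finset.range (m + 1), (a + b + j * b) :=
    Finset.prod_congr rfl fun i _ => by ring
  have hPpos : 0 < ∏ j ∈ Finset.range (m + 1), (a + b + (j : ℝ) * b) := by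
    refine Finset.prod_pos fun j _ => ?_
    have : (0:ℝ) ≤ (j : ℝ) * b := by positivity
    linarith
  rw [hprod, Nat.factorial_succ]
  have hm : (0:ℝ) < (m : ℝ) + 1 := by positivity
  have hfacpos : (0:ℝ) < (m.factorial : ℝ) := by positivity
  push_cast
  field_simp
  ring
end

section
/- For every real number x > 0, the series ∑_{n=0}^∞ 1/(x(x+1)(x+2)⋯(x+n)) converges and its sum equals e · ∫_0^1 u^{x-1} e^{-u} du. -/
open MeasureTheory Nat

lemma beta_real_eval (x : ℝ) (hx : 0 < x) (n : ℕ) :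
    ∫ u in (0:ℝ)..1, u ^ (x - 1) * (1 - u) ^ n
      = (n ! : ℝ) / ∏ j ∈ Finset.range (n + 1), (x + j) := by
  have hxre : 0 < Complex.re (x : ℂ) := by simpa using hx
  have h1 : Complex.betaIntegral x (n + 1)
      = ((∫ u in (0:ℝ)..1, u ^ (x - 1) * (1 - u) ^ n : ℝ) : ℂ) := by
    rw [← intervalIntegral.integral_ofReal, Complex.betaIntegral]
    refine intervalIntegral.integral_congr_ae ?_
    filter_upwards with u hu
    rw [Set.uIoc_of_le zero_le_one] at hu
    have hu0 : (0:ℝ) ≤ u := hu.1.le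
    rw [add_sub_cancel_right, Complex.cpow_natCast, Complex.ofReal_mul,
      Complex.ofReal_pow, Complex.ofReal_sub, Complex.ofReal_one, Complex.ofReal_cpow hu0]
    push_cast
    ring
  have h2 := Complex.betaIntegral_eval_nat_add_one_right hxre n
  rw [h1] at h2
  have h3 : (((n ! : ℝ) / ∏ j ∈ Finset.range (n + 1), (x + j) : ℝ) : ℂ)
      = ((n ! : ℂ) / ∏ j ∈ Finset.range (n + 1), ((x:ℂ) + j) : ℂ) := by
    push_cast
    ring
  rw [← h3] at h2
  exact_mod_cast h2

theorem stmt_7 (x : ℝ) (hx : 0 < x) :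
    HasSum (fun n : ℕ => 1 / ∏ i ∈ Finset.range (n + 1), (x + i))
      (Real.exp 1 * ∫ u in (0 : ℝ)..1, u ^ (x - 1) * Real.exp (-u)) := by
  set μ : Measure ℝ := volume.restrict (Set.Ioc 0 1) with hμ
  set F : ℕ → ℝ → ℝ := fun n u => u ^ (x - 1) * ((1 - u) ^ n / n !) with hF
  have hprod_pos : ∀ n : ℕ, 0 < ∏ i ∈ Finset.range (n + 1), (x + i) := by
    intro n
    apply Finset.prod_pos
    intro i _
    positivity
  -- interval integrability
  have hii : ∀ n : ℕ, IntervalIntegrable (F n) volume 0 1 := by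
    intro n
    exact (intervalIntegral.intervalIntegrable_rpow' (by linarith)).mul_continuousOn
      (Continuous.continuousOn (by continuity))
  have hint : ∀ n : ℕ, Integrable (F n) μ := fun n =>
    (intervalIntegrable_iff_integrableOn_Ioc_of_le zero_le_one).mp (hii n)
  -- value of each integral
  have hval : ∀ n : ℕ, ∫ u, F n u ∂μ = 1 / ∏ i ∈ Finset.range (n + 1), (x + i) := by
    intro n
    have : ∫ u, F n u ∂μ = ∫ u in (0:ℝ)..1, F n u := by
      rw [intervalIntegral.integral_of_le zero_le_one]
    rw [this]
    have hfac : (0:ℝ) < n ! := by positivity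
    calc ∫ u in (0:ℝ)..1, F n u
        = (∫ u in (0:ℝ)..1, u ^ (x - 1) * (1 - u) ^ n) / n ! := by
          rw [← intervalIntegral.integral_div]
          congr 1; funext u; simp [hF]; ring
      _ = ((n ! : ℝ) / ∏ j ∈ Finset.range (n + 1), (x + j)) / n ! := by
          rw [beta_real_eval x hx n]
      _ = 1 / ∏ i ∈ Finset.range (n + 1), (x + i) := by
          field_simp
  -- nonnegativity on Ioc and norm integral
  have hnorm : ∀ n : ℕ, ∫ u, ‖F n u‖ ∂μ = 1 / ∏ i ∈ Finset.range (n + 1), (x + i) := by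
    intro n
    rw [← hval n]
    refine integral_congr_ae ?_
    filter_upwards [ae_restrict_mem measurableSet_Ioc] with u hu
    have h1 : (0:ℝ) ≤ u ^ (x - 1) := Real.rpow_nonneg hu.1.le _
    have h2 : (0:ℝ) ≤ (1 - u) ^ n := pow_nonneg (by linarith [hu.2]) n
    rw [Real.norm_of_nonneg]
    positivity
  -- summability of the values
  have hbound : ∀ n : ℕ, 1 / ∏ i ∈ Finset.range (n + 1), (x + i) ≤ (1/x) * (1 / n !) := by
    intro n
    rw [one_div, one_div, one_div, ← mul_inv, ← one_div, ← one_div]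
    apply one_div_le_one_div_of_le (by positivity)
    induction n with
    | zero => simp
    | succ n ih =>
      rw [Finset.prod_range_succ, Nat.factorial_succ]
      push_cast
      calc x * (((n:ℝ)+1) * n !) = (x * n !) * ((n:ℝ) + 1) := by ring
        _ ≤ (∏ i ∈ Finset.range (n + 1), (x + i)) * (x + ((n:ℝ)+1)) :=
            mul_le_mul ih (by linarith) (by positivity) (hprod_pos n).le
  have hsummable : Summable (fun n : ℕ => 1 / ∏ i ∈ Finset.range (n + 1), (x + i)) := by
    apply Summable.of_nonneg_of_le (fun n => by positivity) hbound
    have := (Real.summable_pow_div_factorial 1).mul_left (1/x)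
    simpa using this
  -- apply the sum-integral interchange
  have hsum := hasSum_integral_of_summable_integral_norm hint
    (by simpa only [hnorm] using hsummable)
  simp only [hval] at hsum
  -- identify the integral of the tsum
  have htsum : ∫ u, (∑' n, F n u) ∂μ
      = Real.exp 1 * ∫ u in (0:ℝ)..1, u ^ (x - 1) * Real.exp (-u) := by
    have hpt : ∀ u : ℝ, (∑' n, F n u) = Real.exp 1 * (u ^ (x - 1) * Real.exp (-u)) := by
      intro u
      have he : (∑' n : ℕ, (1 - u) ^ n / n !) = Real.exp (1 - u) := by
        rw [Real.exp_eq_exp_ℝ, NormedSpace.exp_eq_tsum_div]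
      calc (∑' n, F n u) = u ^ (x - 1) * ∑' n : ℕ, (1 - u) ^ n / n ! := by
            rw [tsum_mul_left]
        _ = u ^ (x - 1) * Real.exp (1 - u) := by rw [he]
        _ = Real.exp 1 * (u ^ (x - 1) * Real.exp (-u)) := by
            rw [show (1 - u) = 1 + (-u) by ring, Real.exp_add]; ring
    simp only [hpt]
    rw [integral_const_mul, intervalIntegral.integral_of_le zero_le_one]
  rwa [htsum] at hsum
end

section
/- For every real number x > 0, one has ∑_{n=0}^∞ 1/(x(x+1)(x+2)⋯(x+n)) = e · ∑_{j=0}^∞ (-1)^j / (j! (x+j)). -/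
open Finset

lemma key (m : ℕ) : ∀ x : ℝ, 0 < x →
    ∑ j ∈ Finset.range (m+1), (-1:ℝ)^j * (m.choose j) / (x + j)
      = (m.factorial : ℝ) / ∏ i ∈ Finset.range (m+1), (x + i) := by
  induction m with
  | zero => intro x hx; simp
  | succ m ih =>
    intro x hx
    have hx1 : (0:ℝ) < x + 1 := by linarith
    have hprod : ∀ y : ℝ, 0 < y → ∏ i ∈ Finset.range (m+1), (y + i) ≠ 0 := by
      intro y hy
      refine Finset.prod_ne_zero_iff.2 fun i _ => ?_
      positivity
    have e1 : ∑ j ∈ Finset.range (m+2), (-1:ℝ)^j * ((m+1).choose j) / (x + j)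
        = (∑ j ∈ Finset.range (m+1), (-1:ℝ)^j * (m.choose j) / (x + j))
          - ∑ j ∈ Finset.range (m+1), (-1:ℝ)^j * (m.choose j) / ((x+1) + j) := by
      rw [Finset.sum_range_succ' (fun j => (-1:ℝ)^j * ((m+1).choose j) / (x + j)) (m+1)]
      rw [Finset.sum_range_succ' (fun j => (-1:ℝ)^j * (m.choose j) / (x + j)) m]
      have hch : ∀ j : ℕ, (((m+1).choose (j+1) : ℕ) : ℝ) = (m.choose j : ℝ) + (m.choose (j+1) : ℝ) := by
        intro j; rw [Nat.choose_succ_succ]; push_cast; ring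
      have split : ∀ j : ℕ, (-1:ℝ)^(j+1) * ((m+1).choose (j+1)) / (x + (j+1 : ℕ))
          = (-1:ℝ)^(j+1) * (m.choose (j+1)) / (x + (j+1 : ℕ))
            - (-1:ℝ)^j * (m.choose j) / ((x+1) + j) := by
        intro j
        rw [hch]
        push_cast
        have : x + ((j:ℝ)+1) ≠ 0 := by positivity
        field_simp
        ring
      rw [Finset.sum_congr rfl (fun j _ => split j), Finset.sum_sub_distrib]
      have hz : ∑ j ∈ Finset.range (m+1), (-1:ℝ)^(j+1) * (m.choose (j+1)) / (x + (j+1:ℕ))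
          = ∑ j ∈ Finset.range m, (-1:ℝ)^(j+1) * (m.choose (j+1)) / (x + (j+1:ℕ)) := by
        rw [Finset.sum_range_succ, Nat.choose_succ_self]
        simp
      rw [hz]
      push_cast
      simp only [Nat.choose_zero_right, Nat.cast_one]
      ring
    rw [e1, ih x hx, ih (x+1) hx1]
    have hP0 := hprod x hx
    have hP1 := hprod (x+1) hx1
    have hshift : ∏ i ∈ Finset.range (m+1), ((x+1) + i) = ∏ i ∈ Finset.range (m+1), (x + (i+1:ℕ)) := by
      apply Finset.prod_congr rfl; intro i _; push_cast; ring
    have e2 : ∏ i ∈ Finset.range (m+2), (x + i) = (∏ i ∈ Finset.range (m+1), ((x+1) + i)) * x := by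
      rw [hshift, Finset.prod_range_succ' (fun i => x + (i:ℕ)) (m+1)]
      norm_num
    have e3 : ∏ i ∈ Finset.range (m+2), (x + i) = (∏ i ∈ Finset.range (m+1), (x + i)) * (x + ((m:ℝ)+1)) := by
      rw [Finset.prod_range_succ]; push_cast; ring
    have hP2 : ∏ i ∈ Finset.range (m+2), (x + i) ≠ 0 := by
      rw [e3]; apply mul_ne_zero hP0; positivity
    rw [div_sub_div _ _ hP0 hP1, div_eq_div_iff (mul_ne_zero hP0 hP1) hP2]
    have hfac : ((m+1).factorial : ℝ) = ((m:ℝ)+1) * (m.factorial:ℝ) := by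
      rw [Nat.factorial_succ]; push_cast; ring
    rw [hfac]
    linear_combination ((m.factorial:ℝ) * (∏ i ∈ Finset.range (m+1), ((x+1) + i))) * e3
      - ((m.factorial:ℝ) * ∏ i ∈ Finset.range (m+1), (x + i)) * e2

theorem stmt_8 (x : ℝ) (hx : 0 < x) :
    ∑' n : ℕ, 1 / ∏ i ∈ Finset.range (n + 1), (x + i) =
      Real.exp 1 * ∑' j : ℕ, (-1) ^ j / (j.factorial * (x + j)) := by
  have hfact : Summable fun k : ℕ => (1:ℝ)/k.factorial := by
    simpa using Real.summable_pow_div_factorial 1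
  have ha : Summable fun k : ℕ => ‖(1:ℝ)/k.factorial‖ := by
    refine hfact.abs.congr fun k => ?_
    rw [Real.norm_eq_abs]
  have hb0 : ∀ j : ℕ, ‖((-1:ℝ))^j/(j.factorial*(x+j))‖ ≤ (1/x) * ((1:ℝ)/j.factorial) := by
    intro j
    have hf : (0:ℝ) < j.factorial := by exact_mod_cast j.factorial_pos
    have hxj : (0:ℝ) < x + j := by positivity
    rw [Real.norm_eq_abs, abs_div, abs_pow, abs_neg, abs_one, one_pow,
      abs_of_pos (by positivity : (0:ℝ) < (j.factorial:ℝ)*(x+j))]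
    have h1 : (1/x) * ((1:ℝ)/j.factorial) = 1/((j.factorial:ℝ)*x) := by
      field_simp
    rw [h1]
    apply one_div_le_one_div_of_le (by positivity)
    have hj0 : (0:ℝ) ≤ (j:ℝ) := Nat.cast_nonneg j
    nlinarith
  have hb : Summable fun j : ℕ => ‖((-1:ℝ))^j/(j.factorial*(x+j))‖ :=
    Summable.of_nonneg_of_le (fun j => norm_nonneg _) hb0 (hfact.mul_left (1/x))
  have hexp : Real.exp 1 = ∑' k : ℕ, (1:ℝ)/k.factorial := by
    rw [Real.exp_eq_exp_ℝ, ← (NormedSpace.expSeries_div_hasSum_exp (1:ℝ)).tsum_eq]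
    exact tsum_congr fun n => by rw [one_pow]
  rw [hexp, tsum_mul_tsum_eq_tsum_sum_range_of_summable_norm ha hb]
  refine tsum_congr fun n => ?_
  have hPn : ∏ i ∈ Finset.range (n+1), (x + (i:ℝ)) ≠ 0 :=
    Finset.prod_ne_zero_iff.2 fun i _ => by positivity
  have hn0 : ((n.factorial : ℕ) : ℝ) ≠ 0 := by exact_mod_cast n.factorial_ne_zero
  have hrefl : ∑ k ∈ Finset.range (n+1),
        (1:ℝ)/k.factorial * ((-1)^(n-k)/((n-k).factorial * (x + ((n-k:ℕ):ℝ))))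
      = ∑ j ∈ Finset.range (n+1),
        (1:ℝ)/(n-j).factorial * ((-1)^j/(j.factorial * (x + (j:ℝ)))) := by
    rw [← Finset.sum_range_reflect]
    refine Finset.sum_congr rfl fun j hj => ?_
    have hjn : j ≤ n := Nat.lt_succ_iff.mp (Finset.mem_range.mp hj)
    have h1 : n + 1 - 1 - j = n - j := by omega
    have h2 : n - (n - j) = j := by omega
    rw [h1, h2]
  rw [hrefl]
  have hkey := key n x hx
  have h3 : (1:ℝ) / ∏ i ∈ Finset.range (n+1), (x + i)
      = (1/(n.factorial:ℝ)) * ((n.factorial:ℝ) / ∏ i ∈ Finset.range (n+1), (x + i)) := by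
    field_simp
  rw [h3, ← hkey, Finset.mul_sum]
  refine Finset.sum_congr rfl fun j hj => ?_
  have hjn : j ≤ n := Nat.lt_succ_iff.mp (Finset.mem_range.mp hj)
  have hc : ((n.choose j : ℕ) : ℝ) * j.factorial * (n-j).factorial = n.factorial := by
    exact_mod_cast congrArg (Nat.cast : ℕ → ℝ) (Nat.choose_mul_factorial_mul_factorial hjn)
  have hjf : ((j.factorial : ℕ) : ℝ) ≠ 0 := by exact_mod_cast j.factorial_ne_zero
  have hnjf : (((n-j).factorial : ℕ) : ℝ) ≠ 0 := by exact_mod_cast (n-j).factorial_ne_zero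
  have hxj : x + (j:ℝ) ≠ 0 := by positivity
  have hCh : ((n.choose j : ℕ) : ℝ) = (n.factorial:ℝ) / (j.factorial * (n-j).factorial) := by
    rw [eq_div_iff (mul_ne_zero hjf hnjf)]
    linear_combination hc
  rw [hCh]
  field_simp
end

section
/- For every integer n ≥ 1, the series ∑_{k=1}^∞ 1/(k(k+2)(k+4)⋯(k+2n)) converges and its sum equals (1/(2^n n!)) ∫_0^1 (1-u^2)^n / (1-u) du. -/
open MeasureTheory intervalIntegral Finset Filter

private lemma hderiv12 (m : ℕ) (x : ℝ) :
    HasDerivAt (fun x : ℝ => -((1 - x^2)^(m+1)) / (2*((m:ℝ)+1)))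
      (x * (1 - x^2)^m) x := by
  have h1 : HasDerivAt (fun x : ℝ => 1 - x^2) (-(2*x^1)) x :=
    (hasDerivAt_pow 2 x).const_sub 1
  have h2 := ((h1.pow (m+1)).neg).div_const (2*((m:ℝ)+1))
  refine h2.congr_deriv ?_
  have hm : (m:ℝ) + 1 ≠ 0 := by positivity
  push_cast
  field_simp

private lemma int1_12 (m : ℕ) :
    ∫ u in (0:ℝ)..1, u * (1 - u^2)^m = 1 / (2*((m:ℝ)+1)) := by
  have h := intervalIntegral.integral_eq_sub_of_hasDerivAt
    (f := fun x : ℝ => -((1 - x^2)^(m+1)) / (2*((m:ℝ)+1)))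
    (f' := fun x : ℝ => x * (1 - x^2)^m)
    (fun x _ => hderiv12 m x)
    ((by fun_prop : Continuous fun u : ℝ => u * (1 - u^2)^m).intervalIntegrable 0 1)
  norm_num at h
  rw [h]; ring

private lemma int2_12 (m : ℕ) :
    ∫ u in (0:ℝ)..1, u^2 * (1 - u^2)^m
      = (1/(2*((m:ℝ)+1))) * ∫ u in (0:ℝ)..1, (1 - u^2)^(m+1) := by
  have h := intervalIntegral.integral_mul_deriv_eq_deriv_mul
    (u := fun x : ℝ => x) (u' := fun _ : ℝ => (1:ℝ))
    (v := fun x : ℝ => -((1 - x^2)^(m+1)) / (2*((m:ℝ)+1)))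
    (v' := fun x : ℝ => x * (1 - x^2)^m)
    (fun x _ => hasDerivAt_id x)
    (fun x _ => hderiv12 m x)
    ((by fun_prop : Continuous fun _ : ℝ => (1:ℝ)).intervalIntegrable 0 1)
    ((by fun_prop : Continuous fun u : ℝ => u * (1 - u^2)^m).intervalIntegrable 0 1)
  norm_num at h
  have h2 : ∫ x in (0:ℝ)..1, x * (x * (1-x^2)^m) = ∫ u in (0:ℝ)..1, u^2 * (1-u^2)^m := by
    apply intervalIntegral.integral_congr
    intro x _
    ring
  rw [h2] at h
  rw [h]; ring

private lemma crec12 (m : ℕ) :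
    ∫ u in (0:ℝ)..1, (1 - u^2)^(m+1)
      = (2*((m:ℝ)+1)/(2*m+3)) * ∫ u in (0:ℝ)..1, (1 - u^2)^m := by
  have hs : ∫ u in (0:ℝ)..1, (1-u^2)^(m+1)
      = (∫ u in (0:ℝ)..1, (1-u^2)^m) - ∫ u in (0:ℝ)..1, u^2*(1-u^2)^m := by
    rw [← intervalIntegral.integral_sub
      ((by fun_prop : Continuous fun u : ℝ => (1-u^2)^m).intervalIntegrable 0 1)
      ((by fun_prop : Continuous fun u : ℝ => u^2*(1-u^2)^m).intervalIntegrable 0 1)]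
    apply intervalIntegral.integral_congr
    intro x _
    simp only [pow_succ]
    ring
  rw [int2_12] at hs
  have hm : (0:ℝ) < 2*((m:ℝ)+1) := by positivity
  have hm3 : (0:ℝ) < 2*(m:ℝ)+3 := by positivity
  set A := ∫ u in (0:ℝ)..1, (1-u^2)^(m+1)
  set B := ∫ u in (0:ℝ)..1, (1-u^2)^m
  field_simp at hs ⊢
  linarith

private lemma cval12 (m : ℕ) :
    ∫ u in (0:ℝ)..1, (1 - u^2)^m
      = 2^m * m.factorial / ∏ i ∈ range (m+1), (2*(i:ℝ)+1) := by
  induction m with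
  | zero => simp
  | succ k ih =>
    rw [crec12 k, ih]
    have hsplit : ∏ i ∈ range (k+2), (2*(i:ℝ)+1)
        = (∏ i ∈ range (k+1), (2*(i:ℝ)+1)) * (2*((k:ℝ)+1)+1) := by
      rw [prod_range_succ]; push_cast; ring
    rw [hsplit]
    have hP : 0 < ∏ i ∈ range (k+1), (2*(i:ℝ)+1) :=
      Finset.prod_pos fun i _ => by positivity
    have h2 : (0:ℝ) < 2*(k:ℝ)+3 := by positivity
    set P := ∏ i ∈ range (k+1), (2*(i:ℝ)+1)
    rw [Nat.factorial_succ]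
    push_cast
    field_simp
    ring

private lemma prod2_12 : ∀ j : ℕ, ∏ i ∈ range j, (2+2*(i:ℝ)) = 2^j * j.factorial
  | 0 => by simp
  | j+1 => by
      rw [prod_range_succ, prod2_12 j, Nat.factorial_succ]
      push_cast; ring

theorem stmt_12 (n : ℕ) (hn : 1 ≤ n) :
    HasSum (fun k : ℕ => 1 / ∏ i ∈ Finset.range (n + 1), ((k : ℝ) + 1 + 2 * i))
      ((1 / (2 ^ n * n.factorial)) * ∫ u in (0 : ℝ)..1, (1 - u ^ 2) ^ n / (1 - u)) := by
  obtain ⟨m, rfl⟩ : ∃ m, n = m + 1 := ⟨n - 1, (Nat.succ_pred_eq_of_pos hn).symm⟩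
  clear hn
  set a : ℕ → ℝ := fun k => 1 / ∏ i ∈ range (m+1), ((k:ℝ) + 1 + 2*(i:ℝ)) with ha
  have hprodpos : ∀ (k j : ℕ), 0 < ∏ i ∈ range j, ((k:ℝ)+1+2*(i:ℝ)) :=
    fun k j => Finset.prod_pos fun i _ => by positivity
  have hapos : ∀ k, 0 < a k := fun k => one_div_pos.mpr (hprodpos k (m+1))
  have hQ : ∀ k : ℕ, a (k+2) = 1 / ∏ i ∈ range (m+1), ((k:ℝ)+3+2*(i:ℝ)) := by
    intro k
    simp only [ha]
    congr 1
    apply Finset.prod_congr rfl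
    intro i _
    push_cast
    ring
  have key : ∀ k : ℕ, (1 / ∏ i ∈ range (m+1+1), ((k:ℝ)+1+2*(i:ℝ)))
      = (1/(2*((m:ℝ)+1))) * (a k - a (k+2)) := by
    intro k
    rw [hQ k]
    have h1 : ∏ i ∈ range (m+2), ((k:ℝ)+1+2*(i:ℝ))
        = (∏ i ∈ range (m+1), ((k:ℝ)+1+2*(i:ℝ))) * ((k:ℝ)+3+2*(m:ℝ)) := by
      rw [prod_range_succ]; push_cast; ring
    have h2 : ∏ i ∈ range (m+2), ((k:ℝ)+1+2*(i:ℝ))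
        = (∏ i ∈ range (m+1), ((k:ℝ)+3+2*(i:ℝ))) * ((k:ℝ)+1) := by
      rw [prod_range_succ']
      congr 1
      · apply Finset.prod_congr rfl
        intro i _
        push_cast
        ring
      · push_cast; ring
    have hQpos : 0 < ∏ i ∈ range (m+1), ((k:ℝ)+3+2*(i:ℝ)) :=
      Finset.prod_pos fun i _ => by positivity
    have hPpos := hprodpos k (m+1)
    have hRpos := hprodpos k (m+2)
    set P := ∏ i ∈ range (m+1), ((k:ℝ)+1+2*(i:ℝ)) with hP
    set Q := ∏ i ∈ range (m+1), ((k:ℝ)+3+2*(i:ℝ)) with hQQ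
    set R := ∏ i ∈ range (m+2), ((k:ℝ)+1+2*(i:ℝ)) with hR
    have e : a k - (1/Q) = (2*((m:ℝ)+1)) / R := by
      simp only [ha, ← hP]
      rw [div_sub_div _ _ hPpos.ne' hQpos.ne',
        div_eq_div_iff (mul_pos hPpos hQpos).ne' hRpos.ne']
      linear_combination Q*h1 - P*h2
    rw [e]
    field_simp
  have tele : ∀ N : ℕ, ∑ k ∈ range N, (a k - a (k+2)) = a 0 + a 1 - a N - a (N+1) := by
    intro N
    induction N with
    | zero => simp
    | succ j ih => rw [sum_range_succ, ih]; ring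
  have hub : ∀ k : ℕ, a k ≤ 1/((k:ℝ)+1) := by
    intro k
    have hbig : (k:ℝ)+1 ≤ ∏ i ∈ range (m+1), ((k:ℝ)+1+2*(i:ℝ)) := by
      rw [prod_range_succ']
      have h1 : (1:ℝ) ≤ ∏ i ∈ range m, ((k:ℝ)+1+2*((i+1:ℕ):ℝ)) := by
        have := Finset.prod_le_prod (s := range m) (f := fun _ : ℕ => (1:ℝ))
          (g := fun i : ℕ => (k:ℝ)+1+2*((i+1:ℕ):ℝ)) (fun i _ => zero_le_one)
          (fun i _ => by push_cast; nlinarith [Nat.cast_nonneg (α := ℝ) k, Nat.cast_nonneg (α := ℝ) i])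
        simpa using this
      have hf0 : ((k:ℝ)+1+2*((0:ℕ):ℝ)) = (k:ℝ)+1 := by norm_num
      rw [hf0]
      nlinarith [Nat.cast_nonneg (α := ℝ) k, h1]
    exact one_div_le_one_div_of_le (by positivity) hbig
  have htend : Tendsto a atTop (nhds 0) :=
    squeeze_zero (fun k => (hapos k).le) hub tendsto_one_div_add_atTop_nhds_zero_nat
  have hpart : ∀ N : ℕ, ∑ k ∈ range N, (1 / ∏ i ∈ range (m+1+1), ((k:ℝ)+1+2*(i:ℝ)))
      = (1/(2*((m:ℝ)+1))) * (a 0 + a 1 - a N - a (N+1)) := by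
    intro N
    rw [Finset.sum_congr rfl (fun k _ => key k), ← Finset.mul_sum, tele N]
  set S := (1/(2*((m:ℝ)+1))) * (a 0 + a 1) with hSdef
  have hT0 : Tendsto (fun N : ℕ => (1/(2*((m:ℝ)+1))) * (a 0 + a 1 - a N - a (N+1)))
      atTop (nhds ((1/(2*((m:ℝ)+1))) * (a 0 + a 1 - 0 - 0))) :=
    Tendsto.const_mul _
      ((tendsto_const_nhds.sub htend).sub (htend.comp (tendsto_add_atTop_nat 1)))
  have hT : Tendsto (fun N : ℕ => ∑ k ∈ range N,
      (1 / ∏ i ∈ range (m+1+1), ((k:ℝ)+1+2*(i:ℝ)))) atTop (nhds S) := by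
    have hSe : S = (1/(2*((m:ℝ)+1))) * (a 0 + a 1 - 0 - 0) := by rw [hSdef]; ring
    rw [hSe]
    exact hT0.congr (fun N => (hpart N).symm)
  have hnonneg : ∀ k : ℕ, 0 ≤ (1 / ∏ i ∈ range (m+1+1), ((k:ℝ)+1+2*(i:ℝ))) :=
    fun k => le_of_lt (one_div_pos.mpr (hprodpos k (m+2)))
  have hc : (0:ℝ) < 1/(2*((m:ℝ)+1)) := by positivity
  have hsummable : Summable (fun k : ℕ => 1 / ∏ i ∈ range (m+1+1), ((k:ℝ)+1+2*(i:ℝ))) := by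
    apply summable_of_sum_range_le hnonneg (c := S)
    intro N
    rw [hpart N, hSdef]
    apply mul_le_mul_of_nonneg_left _ hc.le
    linarith [hapos N, hapos (N+1)]
  have hfin : HasSum (fun k : ℕ => 1 / ∏ i ∈ range (m+1+1), ((k:ℝ)+1+2*(i:ℝ))) S := by
    have h1 := hsummable.hasSum
    rwa [tendsto_nhds_unique h1.tendsto_sum_nat hT] at h1
  convert hfin using 1
  -- value equality
  have hone : ∀ᵐ x : ℝ, x ≠ 1 := by
    rw [ae_iff]
    simp only [not_not, Set.setOf_eq_eq_singleton]
    exact Real.volume_singleton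
  have hcongr : ∫ u in (0:ℝ)..1, (1-u^2)^(m+1)/(1-u)
      = ∫ u in (0:ℝ)..1, ((1-u^2)^m + u*(1-u^2)^m) := by
    apply intervalIntegral.integral_congr_ae
    filter_upwards [hone] with x hx _
    have h1 : (1:ℝ) - x ≠ 0 := sub_ne_zero.mpr (Ne.symm hx)
    field_simp
    ring
  have hI : ∫ u in (0:ℝ)..1, (1-u^2)^(m+1)/(1-u)
      = (∫ u in (0:ℝ)..1, (1-u^2)^m) + 1/(2*((m:ℝ)+1)) := by
    rw [hcongr, intervalIntegral.integral_add
      ((by fun_prop : Continuous fun u : ℝ => (1-u^2)^m).intervalIntegrable 0 1)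
      ((by fun_prop : Continuous fun u : ℝ => u*(1-u^2)^m).intervalIntegrable 0 1),
      int1_12]
  have a0val : a 0 = 1 / ∏ i ∈ range (m+1), (2*(i:ℝ)+1) := by
    simp only [ha]
    congr 1
    apply Finset.prod_congr rfl
    intro i _
    push_cast
    ring
  have a1val : a 1 = 1 / (2^(m+1) * ((m+1).factorial : ℝ)) := by
    simp only [ha]
    rw [← prod2_12 (m+1)]
    congr 1
    apply Finset.prod_congr rfl
    intro i _
    push_cast
    ring
  rw [hI, cval12 m, hSdef, a0val, a1val]
  have hP : 0 < ∏ i ∈ range (m+1), (2*(i:ℝ)+1) :=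
    Finset.prod_pos fun i _ => by positivity
  have hfm : (((m+1).factorial : ℕ) : ℝ) = ((m:ℝ)+1) * (m.factorial : ℝ) := by
    rw [Nat.factorial_succ]; push_cast; ring
  have hfm0 : (0:ℝ) < (m.factorial : ℝ) := by positivity
  push_cast
  rw [hfm]
  set P := ∏ i ∈ range (m+1), (2*(i:ℝ)+1)
  field_simp
  ring
end

section
/- For every integer n ≥ 1, the series ∑_{k=1}^∞ 1/(k(k+2)(k+4)⋯(k+2n)) converges and its sum equals (1/(2n)) · (1/(2n-1)!! + 1/(2n)!!). -/
private lemma stmt13_aux (n k : ℕ) (hn : 1 ≤ n)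
    (P1 P2 : ℝ) (hP1 : 0 < P1) (hP2 : 0 < P2)
    (hQ1 : ((k:ℝ) + 1) * P2 = P1 * ((k:ℝ) + 1 + 2 * n)) :
    (1:ℝ) / (((k:ℝ)+1) * P2) = (1 / (2 * n)) * (1/P1 - 1/P2) := by
  have hn' : (0:ℝ) < 2 * n := by positivity
  have hk : (0:ℝ) < (k:ℝ) + 1 := by positivity
  field_simp
  ring_nf
  linear_combination (-1) * hQ1

theorem stmt_13 (n : ℕ) (hn : 1 ≤ n) :
    HasSum (fun k : ℕ => 1 / ∏ i ∈ Finset.range (n + 1), ((k : ℝ) + 1 + 2 * i))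
      ((1 / (2 * n)) * (1 / ∏ i ∈ Finset.range n, (2 * (i : ℝ) + 1) +
        1 / ∏ i ∈ Finset.range n, (2 * (i : ℝ) + 2))) := by
  set f : ℕ → ℝ := fun k => 1 / ∏ i ∈ Finset.range n, ((k : ℝ) + 1 + 2 * i) with hf
  have hn' : (0:ℝ) < 2 * n := by positivity
  have hpos : ∀ (k m : ℕ), (0:ℝ) < ∏ i ∈ Finset.range m, ((k : ℝ) + 1 + 2 * i) := by
    intro k m
    apply Finset.prod_pos
    intro i _
    positivity
  -- pointwise identity
  have key : ∀ k : ℕ, (1:ℝ) / ∏ i ∈ Finset.range (n + 1), ((k : ℝ) + 1 + 2 * i)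
      = (1 / (2 * n)) * (f k - f (k + 2)) := by
    intro k
    have hP1 := hpos k n
    have hP2 := hpos (k + 2) n
    have hQ1 : ∏ i ∈ Finset.range (n + 1), ((k : ℝ) + 1 + 2 * i)
        = (∏ i ∈ Finset.range n, ((k : ℝ) + 1 + 2 * i)) * ((k : ℝ) + 1 + 2 * n) := by
      rw [Finset.prod_range_succ]
    have hQ2 : ∏ i ∈ Finset.range (n + 1), ((k : ℝ) + 1 + 2 * i)
        = ((k : ℝ) + 1) * ∏ i ∈ Finset.range n, (((k : ℕ) + 2 : ℕ) + 1 + 2 * i : ℝ) := by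
      rw [Finset.prod_range_succ']
      rw [mul_comm]
      congr 1
      · push_cast; ring
      · apply Finset.prod_congr rfl
        intro i _
        push_cast; ring
    simp only [hf]
    rw [hQ2]
    apply stmt13_aux n k hn _ _ hP1 hP2
    rw [hQ2] at hQ1
    linarith [hQ1]
  have hsum : ∀ N : ℕ, ∑ k ∈ Finset.range N, (f k - f (k + 2))
      = f 0 + f 1 - f N - f (N + 1) := by
    intro N
    induction N with
    | zero => simp
    | succ m ih => rw [Finset.sum_range_succ, ih]; ring
  -- f tends to 0
  have hf0 : Filter.Tendsto f Filter.atTop (nhds 0) := by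
    have hle : ∀ k : ℕ, f k ≤ 1 / ((k:ℝ) + 1) := by
      intro k
      have h1 : (k:ℝ) + 1 ≤ ∏ i ∈ Finset.range n, ((k : ℝ) + 1 + 2 * i) := by
        have h := Finset.mul_prod_erase (Finset.range n)
          (fun i : ℕ => (k:ℝ) + 1 + 2 * i) (Finset.mem_range.mpr hn)
        have h2 : (1:ℝ) ≤ ∏ i ∈ (Finset.range n).erase 0, ((k:ℝ) + 1 + 2 * i) := by
          calc (1:ℝ) = ∏ _i ∈ (Finset.range n).erase 0, (1:ℝ) := by simp
          _ ≤ _ := Finset.prod_le_prod (by intros; norm_num)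
              (fun i _ => by
                have hk := Nat.cast_nonneg (α := ℝ) k
                have hi := Nat.cast_nonneg (α := ℝ) i
                linarith)
        calc (k:ℝ) + 1 = ((k:ℝ) + 1 + 2 * (0:ℕ)) * 1 := by push_cast; ring
        _ ≤ ((k:ℝ) + 1 + 2 * (0:ℕ)) * ∏ i ∈ (Finset.range n).erase 0, ((k:ℝ) + 1 + 2 * i) := by
            apply mul_le_mul_of_nonneg_left h2; positivity
        _ = _ := h
      apply div_le_div_of_nonneg_left (by norm_num) (by positivity) h1
    have hge : ∀ k : ℕ, 0 ≤ f k := by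
      intro k
      have := hpos k n
      positivity
    apply squeeze_zero hge hle
    exact tendsto_one_div_add_atTop_nhds_zero_nat
  have hf1 : Filter.Tendsto (fun N => f (N + 1)) Filter.atTop (nhds 0) :=
    hf0.comp (Filter.tendsto_add_atTop_nat 1)
  -- convert HasSum to tendsto of partial sums
  rw [hasSum_iff_tendsto_nat_of_nonneg (by
    intro k
    have := hpos k (n + 1)
    positivity)]
  have heq : ∀ N : ℕ, ∑ k ∈ Finset.range N,
      (1:ℝ) / ∏ i ∈ Finset.range (n + 1), ((k : ℝ) + 1 + 2 * i)
      = (1 / (2 * n)) * (f 0 + f 1 - f N - f (N + 1)) := by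
    intro N
    rw [← hsum N, Finset.mul_sum]
    exact Finset.sum_congr rfl fun k _ => key k
  simp only [heq]
  have hlim : Filter.Tendsto (fun N : ℕ => (1 / (2 * (n:ℝ))) * (f 0 + f 1 - f N - f (N + 1)))
      Filter.atTop (nhds ((1 / (2 * (n:ℝ))) * (f 0 + f 1 - 0 - 0))) := by
    exact (Filter.Tendsto.sub ((tendsto_const_nhds).sub hf0) hf1).const_mul _
  have hval : (1 / (2 * (n:ℝ))) * (f 0 + f 1 - 0 - 0)
      = (1 / (2 * n)) * (1 / ∏ i ∈ Finset.range n, (2 * (i : ℝ) + 1) +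
        1 / ∏ i ∈ Finset.range n, (2 * (i : ℝ) + 2)) := by
    have h0 : f 0 = 1 / ∏ i ∈ Finset.range n, (2 * (i : ℝ) + 1) := by
      simp only [hf]
      congr 1
      apply Finset.prod_congr rfl
      intro i _
      push_cast; ring
    have h1 : f 1 = 1 / ∏ i ∈ Finset.range n, (2 * (i : ℝ) + 2) := by
      simp only [hf]
      congr 1
      apply Finset.prod_congr rfl
      intro i _
      push_cast; ring
    rw [h0, h1]; ring
  rw [← hval]
  exact hlim
end

section
/- For every real number x > 0 and every integer ℓ ≥ 1, the series F(x) = ∑_{n=0}^∞ 1/(x(x+ℓ)(x+2ℓ)⋯(x+nℓ)) converges and F(x) = e^{1/ℓ} · ∫_0^1 u^{x-1} e^{-u^ℓ/ℓ} du = e^{1/ℓ} · ∑_{j=0}^∞ (-1)^j / (ℓ^j j! (x+jℓ)). -/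
open Finset MeasureTheory intervalIntegral


lemma pf_aux (l : ℝ) (hl : 0 < l) : ∀ n : ℕ, ∀ y : ℝ, 0 < y →
    ∑ j ∈ Finset.range (n + 1),
        (-1 : ℝ) ^ j / (j.factorial * (n - j).factorial * (y + j * l))
      = l ^ n / ∏ i ∈ Finset.range (n + 1), (y + i * l) := by
  intro n
  induction n with
  | zero => intro y hy; simp
  | succ n ih =>
    intro y hy
    have hyl : 0 < y + l := by linarith
    have ihy := ih y hy
    have ihyl := ih (y + l) hyl
    -- key recurrence
    have key : ((n : ℝ) + 1) * ∑ j ∈ Finset.range (n + 2),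
          (-1 : ℝ) ^ j / (j.factorial * (n + 1 - j).factorial * (y + j * l))
        = (∑ j ∈ Finset.range (n + 1),
            (-1 : ℝ) ^ j / (j.factorial * (n - j).factorial * (y + j * l)))
          - ∑ j ∈ Finset.range (n + 1),
            (-1 : ℝ) ^ j / (j.factorial * (n - j).factorial * ((y + l) + j * l)) := by
      rw [Finset.mul_sum]
      have hsplit : ∀ j ∈ Finset.range (n + 2),
          ((n : ℝ) + 1) * ((-1 : ℝ) ^ j / (j.factorial * (n + 1 - j).factorial * (y + j * l)))
            = ((n + 1 - j : ℕ) : ℝ) * ((-1 : ℝ) ^ j / (j.factorial * (n + 1 - j).factorial * (y + j * l)))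
              + (j : ℝ) * ((-1 : ℝ) ^ j / (j.factorial * (n + 1 - j).factorial * (y + j * l))) := by
        intro j hj
        rw [Finset.mem_range] at hj
        have hj' : j ≤ n + 1 := Nat.lt_succ_iff.mp hj
        have : ((n + 1 - j : ℕ) : ℝ) = (n : ℝ) + 1 - (j : ℝ) := by
          push_cast [Nat.cast_sub hj']; ring
        rw [this]; ring
      rw [Finset.sum_congr rfl hsplit, Finset.sum_add_distrib]
      congr 1
      · -- sum of A over range (n+2) equals first sum
        rw [Finset.sum_range_succ]
        have hlast : ((n + 1 - (n + 1) : ℕ) : ℝ) = 0 := by simp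
        rw [hlast, zero_mul, add_zero]
        refine Finset.sum_congr rfl fun j hj => ?_
        rw [Finset.mem_range] at hj
        have hj' : j ≤ n := Nat.lt_succ_iff.mp hj
        have h1 : n + 1 - j = (n - j) + 1 := by omega
        have h2 : ((n - j) + 1).factorial = ((n - j) + 1) * (n - j).factorial := rfl
        rw [h1, h2]
        generalize n - j = m
        have hfac : ((m).factorial : ℝ) ≠ 0 := Nat.cast_ne_zero.mpr (Nat.factorial_ne_zero _)
        have hfacj : ((j).factorial : ℝ) ≠ 0 := Nat.cast_ne_zero.mpr (Nat.factorial_ne_zero _)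
        have hy' : y + j * l ≠ 0 := by positivity
        have hnj : ((m : ℕ) : ℝ) + 1 ≠ 0 := by positivity
        push_cast
        field_simp
      · -- sum of B over range (n+2) equals minus the shifted sum
        rw [Finset.sum_range_succ']
        simp only [Nat.cast_zero, zero_mul, add_zero]
        rw [← Finset.sum_neg_distrib]
        refine Finset.sum_congr rfl fun j hj => ?_
        rw [Finset.mem_range] at hj
        have h1 : n + 1 - (j + 1) = n - j := by omega
        have h2 : (j + 1).factorial = (j + 1) * j.factorial := rfl
        rw [h1, h2]
        generalize n - j = m
        have hfacj : ((j).factorial : ℝ) ≠ 0 := Nat.cast_ne_zero.mpr (Nat.factorial_ne_zero _)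
        have hfac : ((m).factorial : ℝ) ≠ 0 := Nat.cast_ne_zero.mpr (Nat.factorial_ne_zero _)
        have hy' : (y + l) + j * l ≠ 0 := by positivity
        have hj1 : ((j : ℝ) + 1) ≠ 0 := by positivity
        have hyy : y + ((j : ℝ) + 1) * l ≠ 0 := by nlinarith [hy', hyl]
        push_cast
        rw [pow_succ]
        field_simp
        ring
    have hn1 : ((n : ℝ) + 1) ≠ 0 := by positivity
    have hPy : (0 : ℝ) < ∏ i ∈ Finset.range (n + 1), (y + i * l) :=
      Finset.prod_pos fun i _ => by positivity
    have hPyl : (0 : ℝ) < ∏ i ∈ Finset.range (n + 1), ((y + l) + i * l) :=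
      Finset.prod_pos fun i _ => by positivity
    have hQ : (0 : ℝ) < ∏ i ∈ Finset.range (n + 2), (y + i * l) :=
      Finset.prod_pos fun i _ => by positivity
    have hQ1 : ∏ i ∈ Finset.range (n + 2), (y + i * l)
        = (∏ i ∈ Finset.range (n + 1), (y + i * l)) * (y + ((n : ℝ) + 1) * l) := by
      rw [Finset.prod_range_succ]; push_cast; ring
    have hQ2 : ∏ i ∈ Finset.range (n + 2), (y + i * l)
        = (∏ i ∈ Finset.range (n + 1), ((y + l) + i * l)) * y := by
      rw [Finset.prod_range_succ']
      congr 1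
      · refine Finset.prod_congr rfl fun i _ => ?_
        push_cast; ring
      · norm_num
    have hS : ∑ j ∈ Finset.range (n + 2),
          (-1 : ℝ) ^ j / (j.factorial * (n + 1 - j).factorial * (y + j * l))
        = (l ^ n / ∏ i ∈ Finset.range (n + 1), (y + i * l)
            - l ^ n / ∏ i ∈ Finset.range (n + 1), ((y + l) + i * l)) / ((n : ℝ) + 1) := by
      rw [eq_div_iff hn1, mul_comm, key, ihy, ihyl]
    have e1 : l ^ n / ∏ i ∈ Finset.range (n + 1), (y + i * l)
        = l ^ n * (y + ((n : ℝ) + 1) * l) / ∏ i ∈ Finset.range (n + 2), (y + i * l) := by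
      rw [hQ1]
      rw [div_eq_div_iff hPy.ne' (by positivity)]
      ring
    have e2 : l ^ n / ∏ i ∈ Finset.range (n + 1), ((y + l) + i * l)
        = l ^ n * y / ∏ i ∈ Finset.range (n + 2), (y + i * l) := by
      rw [hQ2]
      rw [div_eq_div_iff hPyl.ne' (by positivity)]
      ring
    rw [hS, e1, e2]
    rw [div_sub_div_same, div_div, div_eq_div_iff (by positivity) hQ.ne']
    ring

lemma cauchy_term (l : ℝ) (hl : 0 < l) (x : ℝ) (hx : 0 < x) (n : ℕ) :
    ∑ k ∈ Finset.range (n + 1),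
        ((1 / l) ^ k / k.factorial) *
          ((-1 : ℝ) ^ (n - k) / (l ^ (n - k) * (n - k).factorial * (x + ((n - k : ℕ) : ℝ) * l)))
      = 1 / ∏ i ∈ Finset.range (n + 1), (x + i * l) := by
  have h1 : ∀ k ∈ Finset.range (n + 1),
      ((1 / l) ^ k / k.factorial) *
          ((-1 : ℝ) ^ (n - k) / (l ^ (n - k) * (n - k).factorial * (x + ((n - k : ℕ) : ℝ) * l)))
        = (1 / l ^ n) *
            ((-1 : ℝ) ^ (n - k) / ((n - k).factorial * (n - (n - k)).factorial * (x + ((n - k : ℕ) : ℝ) * l))) := by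
    intro k hk
    rw [Finset.mem_range] at hk
    have hk' : k ≤ n := Nat.lt_succ_iff.mp hk
    rw [Nat.sub_sub_self hk']
    have hpow : l ^ k * l ^ (n - k) = l ^ n := by
      rw [← pow_add, Nat.add_sub_cancel' hk']
    generalize n - k = m at *
    have hfk : ((k).factorial : ℝ) ≠ 0 := Nat.cast_ne_zero.mpr (Nat.factorial_ne_zero _)
    have hfm : ((m).factorial : ℝ) ≠ 0 := Nat.cast_ne_zero.mpr (Nat.factorial_ne_zero _)
    have hxm : x + ((m : ℕ) : ℝ) * l ≠ 0 := by positivity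
    have hl0 : l ≠ 0 := hl.ne'
    field_simp
    rw [← hpow]
    rw [← mul_assoc, ← mul_pow, one_div_mul_cancel hl0, one_pow, one_mul]
  rw [Finset.sum_congr rfl h1, ← Finset.mul_sum]
  have hre := Finset.sum_range_reflect
    (fun j => (-1 : ℝ) ^ j / (j.factorial * (n - j).factorial * (x + j * l))) (n + 1)
  simp only [Nat.add_sub_cancel] at hre
  rw [hre, pf_aux l hl n x hx]
  have hP : (0 : ℝ) < ∏ i ∈ Finset.range (n + 1), (x + i * l) :=
    Finset.prod_pos fun i _ => by positivity
  field_simp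
  exact Finset.prod_congr rfl fun i _ => by ring


lemma integral_eq (x : ℝ) (hx : 0 < x) (ℓ : ℕ) (hℓ : 1 ≤ ℓ) :
    ∫ u in (0 : ℝ)..1, u ^ (x - 1) * Real.exp (-u ^ ℓ / ℓ)
      = ∑' j : ℕ, (-1) ^ j / ((ℓ : ℝ) ^ j * j.factorial * (x + j * ℓ)) := by
  have hl0 : (0 : ℝ) < ℓ := by exact_mod_cast hℓ
  have hl1 : (1 : ℝ) ≤ ℓ := by exact_mod_cast hℓ
  set F : ℕ → ℝ → ℝ := fun j u => u ^ (x - 1) * ((-u ^ ℓ / ℓ) ^ j / j.factorial) with hF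
  set r : ℕ → ℝ := fun j => x - 1 + ((ℓ * j : ℕ) : ℝ) with hr
  have hrpos : ∀ j, -1 < r j := fun j => by
    have : (0 : ℝ) ≤ ((ℓ * j : ℕ) : ℝ) := Nat.cast_nonneg _
    simp only [hr]; linarith
  have hr1 : ∀ j : ℕ, r j + 1 = x + j * ℓ := fun j => by
    simp only [hr]; push_cast; ring
  have hr1pos : ∀ j : ℕ, 0 < x + (j : ℝ) * ℓ := fun j => by positivity
  -- pointwise description on Ioc
  have haeq : ∀ j : ℕ, ∀ u ∈ Set.Ioc (0 : ℝ) 1,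
      F j u = ((-1 : ℝ) ^ j / ((ℓ : ℝ) ^ j * j.factorial)) * u ^ (r j) := by
    intro j u hu
    have hu0 : 0 < u := hu.1
    have h1 : (-u ^ ℓ / (ℓ : ℝ)) ^ j = (-1 : ℝ) ^ j * u ^ (((ℓ * j : ℕ)) : ℝ) / (ℓ : ℝ) ^ j := by
      rw [neg_div, neg_pow, div_pow, ← pow_mul, Real.rpow_natCast]
      ring
    have h2 : u ^ (r j) = u ^ (x - 1) * u ^ (((ℓ * j : ℕ)) : ℝ) := by
      rw [hr, Real.rpow_add hu0]
    show u ^ (x - 1) * ((-u ^ ℓ / (ℓ : ℝ)) ^ j / (j.factorial : ℝ)) = _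
    rw [h1, h2]
    ring
  -- integrability
  have hbase : ∀ j : ℕ, IntegrableOn (fun u : ℝ => u ^ (r j)) (Set.Ioc 0 1) volume := by
    intro j
    rw [← intervalIntegrable_iff_integrableOn_Ioc_of_le zero_le_one]
    exact intervalIntegral.intervalIntegrable_rpow' (hrpos j)
  have hF_int : ∀ j : ℕ, IntegrableOn (F j) (Set.Ioc 0 1) volume := by
    intro j
    refine IntegrableOn.congr_fun ((hbase j).const_mul ((-1 : ℝ) ^ j / ((ℓ : ℝ) ^ j * j.factorial)))
      (fun u hu => (haeq j u hu).symm) measurableSet_Ioc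
  -- value of base integral
  have hval : ∀ j : ℕ, ∫ u in Set.Ioc (0 : ℝ) 1, u ^ (r j) = 1 / (x + j * ℓ) := by
    intro j
    rw [← intervalIntegral.integral_of_le zero_le_one, integral_rpow (Or.inl (hrpos j)), hr1 j]
    rw [Real.one_rpow, Real.zero_rpow (hr1pos j).ne']
    rw [sub_zero, one_div]
  -- value of each integral
  have hFval : ∀ j : ℕ, ∫ u in Set.Ioc (0 : ℝ) 1, F j u
      = (-1 : ℝ) ^ j / ((ℓ : ℝ) ^ j * j.factorial * (x + j * ℓ)) := by
    intro j
    rw [setIntegral_congr_fun measurableSet_Ioc (haeq j), MeasureTheory.integral_const_mul, hval j]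
    have h1 : ((ℓ : ℝ) ^ j * j.factorial) ≠ 0 := by positivity
    field_simp
  -- norms
  have hnorm : ∀ j : ℕ, ∫ u in Set.Ioc (0 : ℝ) 1, ‖F j u‖
      = 1 / ((ℓ : ℝ) ^ j * j.factorial * (x + j * ℓ)) := by
    intro j
    have : Set.EqOn (fun u : ℝ => ‖F j u‖)
        (fun u : ℝ => (1 / ((ℓ : ℝ) ^ j * j.factorial)) * u ^ (r j)) (Set.Ioc 0 1) := by
      intro u hu
      have hu0 : 0 < u := hu.1
      have hrp : (0 : ℝ) ≤ u ^ (r j) := (Real.rpow_pos_of_pos hu0 _).le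
      simp only [haeq j u hu, Real.norm_eq_abs, abs_mul, abs_div, abs_pow, abs_neg, abs_one,
        one_pow, abs_of_nonneg hrp]
      rw [abs_of_nonneg (by positivity : (0:ℝ) ≤ (ℓ : ℝ)), abs_of_nonneg (by positivity : (0:ℝ) ≤ (j.factorial : ℝ))]
    rw [setIntegral_congr_fun measurableSet_Ioc this, MeasureTheory.integral_const_mul, hval j]
    have h1 : ((ℓ : ℝ) ^ j * j.factorial) ≠ 0 := by positivity
    field_simp
  have hF_sum : Summable fun j : ℕ => ∫ u in Set.Ioc (0 : ℝ) 1, ‖F j u‖ := by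
    refine Summable.of_nonneg_of_le (fun j => ?_) (fun j => ?_)
      (((Real.summable_pow_div_factorial 1).mul_left x⁻¹))
    · rw [hnorm j]; positivity
    · rw [hnorm j, one_pow]
      have hfj : (0 : ℝ) < (j.factorial : ℝ) := by exact_mod_cast j.factorial_pos
      have h1 : (1 : ℝ) ≤ (ℓ : ℝ) ^ j := one_le_pow₀ hl1
      have h2 : (j.factorial : ℝ) * x ≤ (ℓ : ℝ) ^ j * j.factorial * (x + j * ℓ) := by
        have h3 : (0 : ℝ) ≤ (j : ℝ) * ℓ := by positivity
        calc (j.factorial : ℝ) * x ≤ (j.factorial : ℝ) * (x + j * ℓ) :=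
              mul_le_mul_of_nonneg_left (by linarith) hfj.le
          _ = 1 * ((j.factorial : ℝ) * (x + j * ℓ)) := (one_mul _).symm
          _ ≤ (ℓ : ℝ) ^ j * ((j.factorial : ℝ) * (x + j * ℓ)) :=
              mul_le_mul_of_nonneg_right h1 (by positivity)
          _ = (ℓ : ℝ) ^ j * j.factorial * (x + j * ℓ) := by ring
      have h4 : x⁻¹ * (1 / (j.factorial : ℝ)) = 1 / ((j.factorial : ℝ) * x) := by
        rw [one_div, one_div, mul_inv]; ring
      rw [h4]
      exact one_div_le_one_div_of_le (by positivity) h2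
  -- expand exp as series
  have hexp : ∀ u : ℝ, u ^ (x - 1) * Real.exp (-u ^ ℓ / ℓ) = ∑' j : ℕ, F j u := by
    intro u
    rw [Real.exp_eq_exp_ℝ, ← (NormedSpace.expSeries_div_hasSum_exp (-u ^ ℓ / (ℓ:ℝ))).tsum_eq,
      ← tsum_mul_left]
  rw [intervalIntegral.integral_of_le zero_le_one]
  simp only [hexp]
  rw [← MeasureTheory.integral_tsum_of_summable_integral_norm hF_int hF_sum]
  exact tsum_congr hFval


theorem stmt_15 (x : ℝ) (hx : 0 < x) (ℓ : ℕ) (hℓ : 1 ≤ ℓ) :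
    HasSum (fun n : ℕ => 1 / ∏ i ∈ Finset.range (n + 1), (x + i * ℓ))
      (Real.exp (1 / ℓ) * ∫ u in (0 : ℝ)..1, u ^ (x - 1) * Real.exp (-u ^ ℓ / ℓ)) ∧
    Summable (fun j : ℕ => (-1) ^ j / ((ℓ : ℝ) ^ j * j.factorial * (x + j * ℓ))) ∧
    Real.exp (1 / ℓ) * ∫ u in (0 : ℝ)..1, u ^ (x - 1) * Real.exp (-u ^ ℓ / ℓ) =
      Real.exp (1 / ℓ) * ∑' j : ℕ, (-1) ^ j / ((ℓ : ℝ) ^ j * j.factorial * (x + j * ℓ)) := by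
  have hl0 : (0 : ℝ) < ℓ := by exact_mod_cast hℓ
  have hl1 : (1 : ℝ) ≤ ℓ := by exact_mod_cast hℓ
  have hg_norm : Summable fun j : ℕ =>
      ‖(-1 : ℝ) ^ j / ((ℓ : ℝ) ^ j * j.factorial * (x + j * ℓ))‖ := by
    refine Summable.of_nonneg_of_le (fun j => norm_nonneg _) (fun j => ?_)
      ((Real.summable_pow_div_factorial 1).mul_left x⁻¹)
    have hD : (0 : ℝ) < (ℓ : ℝ) ^ j * j.factorial * (x + j * ℓ) := by positivity
    have hnormval : ‖(-1 : ℝ) ^ j / ((ℓ : ℝ) ^ j * j.factorial * (x + j * ℓ))‖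
        = 1 / ((ℓ : ℝ) ^ j * j.factorial * (x + j * ℓ)) := by
      rw [Real.norm_eq_abs, abs_div, abs_pow, abs_neg, abs_one, one_pow, abs_of_pos hD]
    rw [hnormval, one_pow]
    have hfj : (0 : ℝ) < (j.factorial : ℝ) := by exact_mod_cast j.factorial_pos
    have h1 : (1 : ℝ) ≤ (ℓ : ℝ) ^ j := one_le_pow₀ hl1
    have h2 : (j.factorial : ℝ) * x ≤ (ℓ : ℝ) ^ j * j.factorial * (x + j * ℓ) := by
      have h3 : (0 : ℝ) ≤ (j : ℝ) * ℓ := by positivity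
      calc (j.factorial : ℝ) * x ≤ (j.factorial : ℝ) * (x + j * ℓ) :=
            mul_le_mul_of_nonneg_left (by linarith) hfj.le
        _ = 1 * ((j.factorial : ℝ) * (x + j * ℓ)) := (one_mul _).symm
        _ ≤ (ℓ : ℝ) ^ j * ((j.factorial : ℝ) * (x + j * ℓ)) :=
            mul_le_mul_of_nonneg_right h1 (by positivity)
        _ = (ℓ : ℝ) ^ j * j.factorial * (x + j * ℓ) := by ring
    have h4 : x⁻¹ * (1 / (j.factorial : ℝ)) = 1 / ((j.factorial : ℝ) * x) := by
      rw [one_div, one_div, mul_inv]; ring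
    rw [h4]
    exact one_div_le_one_div_of_le (by positivity) h2
  have hf_norm : Summable fun k : ℕ => ‖(1 / (ℓ : ℝ)) ^ k / k.factorial‖ := by
    simpa only [Real.norm_eq_abs] using (Real.summable_pow_div_factorial (1 / (ℓ : ℝ))).abs
  have hexp : HasSum (fun k : ℕ => (1 / (ℓ : ℝ)) ^ k / k.factorial) (Real.exp (1 / ℓ)) := by
    rw [Real.exp_eq_exp_ℝ]
    exact NormedSpace.expSeries_div_hasSum_exp _
  have hco := hasSum_sum_range_mul_of_summable_norm hf_norm hg_norm
  rw [hexp.tsum_eq] at hco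
  have hterm : (fun n : ℕ => ∑ k ∈ Finset.range (n + 1),
        ((1 / (ℓ : ℝ)) ^ k / k.factorial) *
          ((-1 : ℝ) ^ (n - k) / ((ℓ : ℝ) ^ (n - k) * (n - k).factorial * (x + ((n - k : ℕ) : ℝ) * ℓ))))
      = fun n : ℕ => 1 / ∏ i ∈ Finset.range (n + 1), (x + i * ℓ) :=
    funext fun n => cauchy_term (ℓ : ℝ) hl0 x hx n
  rw [hterm] at hco
  have hInt := integral_eq x hx ℓ hℓ
  exact ⟨by rw [hInt]; exact hco, Summable.of_norm hg_norm, by rw [hInt]⟩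
end

section
/- For all integers ℓ ≥ 1 and n ≥ 1, the series ∑_{k=1}^∞ 1/(k(k+ℓ)(k+2ℓ)⋯(k+nℓ)) converges and its sum equals (1/(ℓn)) · ∑_{m=0}^{ℓ-1} ∏_{i=1}^{n} 1/(ℓi - m). -/
set_option maxHeartbeats 1000000

open Finset Filter

theorem stmt_17 (ℓ n : ℕ) (hℓ : 1 ≤ ℓ) (hn : 1 ≤ n) :
    HasSum (fun k : ℕ => 1 / ∏ i ∈ Finset.range (n + 1), ((k : ℝ) + 1 + i * ℓ))
      ((1 / ((ℓ : ℝ) * n)) * ∑ m ∈ Finset.range ℓ,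
        ∏ i ∈ Finset.range n, 1 / ((ℓ : ℝ) * (i + 1) - m)) := by
  have hℓ0 : (0:ℝ) < ℓ := by exact_mod_cast hℓ
  have hn0 : (0:ℝ) < n := by exact_mod_cast hn
  set g : ℕ → ℝ := fun k => 1 / ∏ i ∈ Finset.range n, ((k : ℝ) + 1 + i * ℓ) with hg
  have hpos : ∀ k i : ℕ, (0:ℝ) < (k:ℝ) + 1 + i * ℓ := by
    intro k i
    have h1 : (0:ℝ) ≤ (i:ℝ) * ℓ := by positivity
    have h2 : (0:ℝ) ≤ (k:ℝ) := Nat.cast_nonneg k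
    linarith
  have hprodpos : ∀ k m : ℕ, (0:ℝ) < ∏ i ∈ Finset.range m, ((k : ℝ) + 1 + i * ℓ) := by
    intro k m; exact Finset.prod_pos fun i _ => hpos k i
  have hgpos : ∀ k, 0 < g k := fun k => by
    simpa [hg] using one_div_pos.mpr (hprodpos k n)
  have hgle : ∀ k : ℕ, g k ≤ 1 / ((k:ℝ) + 1) := by
    intro k
    have hk1 : (0:ℝ) < (k:ℝ) + 1 := by positivity
    have hle : ((k:ℝ) + 1) ≤ ∏ i ∈ Finset.range n, ((k : ℝ) + 1 + i * ℓ) := by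
      have h2 : (0:ℝ) ≤ (k:ℝ) := Nat.cast_nonneg k
      calc ((k:ℝ) + 1) ≤ ((k:ℝ) + 1) ^ n := le_self_pow₀ (by linarith) (by omega)
        _ = ∏ _i ∈ Finset.range n, ((k:ℝ) + 1) := by
            rw [Finset.prod_const, Finset.card_range]
        _ ≤ ∏ i ∈ Finset.range n, ((k : ℝ) + 1 + i * ℓ) := by
            apply Finset.prod_le_prod
            · intro i _; linarith
            · intro i _
              have h1 : (0:ℝ) ≤ (i:ℝ) * ℓ := by positivity
              linarith
    exact one_div_le_one_div_of_le hk1 hle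
  have hgto : Tendsto g atTop (nhds 0) := by
    apply squeeze_zero (fun k => (hgpos k).le) hgle
    exact tendsto_one_div_add_atTop_nhds_zero_nat
  -- key telescoping identity
  have key : ∀ k : ℕ,
      (1 : ℝ) / ∏ i ∈ Finset.range (n + 1), ((k : ℝ) + 1 + i * ℓ)
        = (1 / ((ℓ:ℝ) * n)) * (g k - g (k + ℓ)) := by
    intro k
    have hQ := hprodpos k n
    have hP := hprodpos k (n + 1)
    have hA : (0:ℝ) < (k:ℝ) + 1 + n * ℓ := hpos k n
    have hk1 : (0:ℝ) < (k:ℝ) + 1 := by positivity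
    have e1 : ∏ i ∈ Finset.range (n+1), ((k : ℝ) + 1 + i * ℓ)
        = (∏ i ∈ Finset.range n, ((k : ℝ) + 1 + i * ℓ)) * ((k:ℝ) + 1 + n * ℓ) :=
      Finset.prod_range_succ _ n
    have e2 : ∏ i ∈ Finset.range (n+1), ((k : ℝ) + 1 + i * ℓ)
        = ((k:ℝ) + 1) * ∏ i ∈ Finset.range n, (((k + ℓ : ℕ) : ℝ) + 1 + i * ℓ) := by
      rw [Finset.prod_range_succ' (fun i => ((k : ℝ) + 1 + i * ℓ)) n, mul_comm]
      congr 1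
      · push_cast; ring
      · apply Finset.prod_congr rfl
        intro i _
        push_cast; ring
    have hQ' : (0:ℝ) < ∏ i ∈ Finset.range n, (((k + ℓ : ℕ) : ℝ) + 1 + i * ℓ) :=
      hprodpos (k + ℓ) n
    have hga : g k = ((k:ℝ) + 1 + n * ℓ) / ∏ i ∈ Finset.range (n+1), ((k : ℝ) + 1 + i * ℓ) := by
      rw [hg]; simp only
      rw [e1]
      rw [eq_div_iff (by positivity)]
      field_simp
      exact Finset.prod_congr rfl fun i _ => by ring
    have hgb : g (k + ℓ) = ((k:ℝ) + 1) / ∏ i ∈ Finset.range (n+1), ((k : ℝ) + 1 + i * ℓ) := by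
      rw [hg]; simp only
      rw [e2]
      rw [eq_div_iff (by positivity)]
      field_simp
      exact Finset.prod_congr rfl fun i _ => by ring
    rw [hga, hgb, div_sub_div_same]
    have : (k:ℝ) + 1 + n * ℓ - ((k:ℝ) + 1) = (ℓ:ℝ) * n := by ring
    rw [this]
    field_simp
    exact Finset.prod_congr rfl fun i _ => by ring
  -- reindex the target sum
  have Ssum : ∑ m ∈ Finset.range ℓ, ∏ i ∈ Finset.range n, 1 / ((ℓ : ℝ) * (i + 1) - m)
      = ∑ k ∈ Finset.range ℓ, g k := by
    rw [← Finset.sum_range_reflect (fun k => g k) ℓ]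
    apply Finset.sum_congr rfl
    intro m hm
    have hm' : m < ℓ := Finset.mem_range.mp hm
    have hcast : ((ℓ - 1 - m : ℕ) : ℝ) = (ℓ:ℝ) - 1 - m := by
      have h1 : 1 + m ≤ ℓ := by omega
      rw [Nat.sub_sub, Nat.cast_sub h1]
      push_cast; ring
    rw [hg]; simp only
    rw [one_div, ← Finset.prod_inv_distrib]
    apply Finset.prod_congr rfl
    intro i _
    rw [one_div]
    congr 1
    rw [hcast]; push_cast; ring
  rw [Ssum]
  set c : ℝ := 1 / ((ℓ:ℝ) * n) with hc
  set Sg : ℝ := ∑ k ∈ Finset.range ℓ, g k with hSg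
  have hnonneg : ∀ k : ℕ, (0:ℝ) ≤ 1 / ∏ i ∈ Finset.range (n + 1), ((k : ℝ) + 1 + i * ℓ) :=
    fun k => le_of_lt (one_div_pos.mpr (hprodpos k (n+1)))
  rw [hasSum_iff_tendsto_nat_of_nonneg hnonneg]
  -- partial sum formula for N ≥ ℓ
  have hpartial : ∀ N : ℕ, ℓ ≤ N →
      ∑ k ∈ Finset.range N, (1:ℝ) / ∏ i ∈ Finset.range (n + 1), ((k : ℝ) + 1 + i * ℓ)
        = c * (Sg - ∑ j ∈ Finset.range ℓ, g (N + j)) := by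
    intro N hN
    have : ∑ k ∈ Finset.range N, (1:ℝ) / ∏ i ∈ Finset.range (n + 1), ((k : ℝ) + 1 + i * ℓ)
        = ∑ k ∈ Finset.range N, c * (g k - g (k + ℓ)) :=
      Finset.sum_congr rfl fun k _ => key k
    rw [this, ← Finset.mul_sum]
    congr 1
    rw [Finset.sum_sub_distrib]
    have h1 : ∑ k ∈ Finset.range N, g (k + ℓ) = ∑ k ∈ Finset.Ico ℓ (N + ℓ), g k := by
      rw [Finset.sum_Ico_eq_sum_range]
      simp [add_comm]
    have h2 : ∑ k ∈ Finset.range N, g k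
        = ∑ k ∈ Finset.range ℓ, g k + ∑ k ∈ Finset.Ico ℓ N, g k := by
      rw [Finset.range_eq_Ico, ← Finset.sum_Ico_consecutive g (Nat.zero_le ℓ) hN,
        ← Finset.range_eq_Ico]
    have h3 : ∑ k ∈ Finset.Ico ℓ (N + ℓ), g k
        = ∑ k ∈ Finset.Ico ℓ N, g k + ∑ k ∈ Finset.Ico N (N + ℓ), g k := by
      rw [← Finset.sum_Ico_consecutive g hN (Nat.le_add_right N ℓ)]
    have h4 : ∑ k ∈ Finset.Ico N (N + ℓ), g k = ∑ j ∈ Finset.range ℓ, g (N + j) := by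
      rw [Finset.sum_Ico_eq_sum_range]
      simp
    rw [h1, h2, h3, h4, hSg]
    ring
  have htail : Tendsto (fun N : ℕ => ∑ j ∈ Finset.range ℓ, g (N + j)) atTop (nhds 0) := by
    have h0 : (0:ℝ) = ∑ _j ∈ Finset.range ℓ, (0:ℝ) := by simp
    rw [h0]
    apply tendsto_finset_sum
    intro j _
    exact hgto.comp (tendsto_add_atTop_nat j)
  have hlim : Tendsto (fun N : ℕ => c * (Sg - ∑ j ∈ Finset.range ℓ, g (N + j))) atTop
      (nhds (c * Sg)) := by
    have := (tendsto_const_nhds (x := Sg) (f := atTop (α := ℕ))).sub htail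
    simpa using this.const_mul c
  apply hlim.congr'
  filter_upwards [eventually_ge_atTop ℓ] with N hN
  exact (hpartial N hN).symm
end
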